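/- Let f : Finset(V) × X → ℝ be adaptive monotone and ζ-weakly adaptive submodular for some constant ζ ≥ 1. Let ψ be a partial realization with P[ψ] > 0, let π be any policy, and let k ≥ 1. Define the conditional expected marginal benefit of the policy π as Δ(π|ψ) := P[ψ]^{-1} · ∑_{x consistent with ψ} p(x)·(f(acts(ψ) ∪ V(π,k,x), x) − f(acts(ψ), x)). Then Δ(π|ψ) ≤ ζ · max_{A ⊆ V, |A| ≤ k} ∑_{v∈A} Δ(v|ψ). -/

import Mathlib

attribute [local instance] Classical.propDecidable

noncomputable section

/-- A state `x` is consistent with partial realization `ψ` if every recorded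
action–outcome pair agrees with the outcome model `μ`. -/
def Consistent {X V Y : Type*} (μ : V → X → Y) (x : X) (ψ : Finset (V × Y)) : Prop :=
  ∀ e ∈ ψ, μ e.1 x = e.2

/-- The set of actions occurring in a partial realization. -/
def acts {V Y : Type*} (ψ : Finset (V × Y)) : Finset V := ψ.image Prod.fst

/-- `P[ψ]`: total prior probability of the states consistent with `ψ`. -/
def probP {X V Y : Type*} [Fintype X] (p : X → ℝ) (μ : V → X → Y)
    (ψ : Finset (V × Y)) : ℝ :=
  ∑ x ∈ Finset.univ.filter (fun x => Consistent μ x ψ), p x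

/-- Conditional expected marginal benefit `Δ(v|ψ)` of action `v` given `ψ`. -/
def margBen {X V Y : Type*} [Fintype X] (p : X → ℝ) (μ : V → X → Y)
    (f : Finset V → X → ℝ) (v : V) (ψ : Finset (V × Y)) : ℝ :=
  (probP p μ ψ)⁻¹ *
    ∑ x ∈ Finset.univ.filter (fun x => Consistent μ x ψ),
      p x * (f (insert v (acts ψ)) x - f (acts ψ) x)

/-- Adaptive monotonicity: every conditional expected marginal benefit is nonnegative. -/
def AdaptiveMonotone {X V Y : Type*} [Fintype X] (p : X → ℝ) (μ : V → X → Y)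
    (f : Finset V → X → ℝ) : Prop :=
  ∀ (v : V) (ψ : Finset (V × Y)), 0 < probP p μ ψ → 0 ≤ margBen p μ f v ψ

/-- `ζ`-weak adaptive submodularity. -/
def WeakAdaptiveSubmodular {X V Y : Type*} [Fintype X] (p : X → ℝ) (μ : V → X → Y)
    (f : Finset V → X → ℝ) (ζ : ℝ) : Prop :=
  ∀ ψ ψ' : Finset (V × Y), ψ ⊆ ψ' → 0 < probP p μ ψ' →
    ∀ v ∉ acts ψ', margBen p μ f v ψ' ≤ ζ * margBen p μ f v ψ

/-- History of action–outcome pairs generated by running policy `π` for `t`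
steps under true state `x`. -/
def hist {X V Y : Type*} (μ : V → X → Y) (π : List (V × Y) → V) (x : X) :
    ℕ → List (V × Y)
  | 0 => []
  | t + 1 =>
      hist μ π x t ++ [(π (hist μ π x t), μ (π (hist μ π x t)) x)]

/-- The set of actions appearing in a history. -/
def actsOf {V Y : Type*} (h : List (V × Y)) : Finset V := (h.map Prod.fst).toFinset

/-- Average reward `f_avg(π, t)` of policy `π` at horizon `t`. -/
def favg {X V Y : Type*} [Fintype X] (p : X → ℝ) (μ : V → X → Y)
    (f : Finset V → X → ℝ) (π : List (V × Y) → V) (t : ℕ) : ℝ :=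
  ∑ x, p x * f (actsOf (hist μ π x t)) x

/-- A greedy policy: at every history reachable under some state of positive
prior probability, the chosen action maximizes the conditional expected
marginal benefit. -/
def IsGreedy {X V Y : Type*} [Fintype X] (p : X → ℝ) (μ : V → X → Y)
    (f : Finset V → X → ℝ) (π : List (V × Y) → V) : Prop :=
  ∀ x : X, 0 < p x → ∀ t : ℕ, ∀ v : V,
    margBen p μ f v (hist μ π x t).toFinset ≤
      margBen p μ f (π (hist μ π x t)) (hist μ π x t).toFinset

/-!
Telescope `f (acts ψ ∪ V(π,k,x)) x - f (acts ψ) x` over the `k` steps of the policy. At step `i`,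
the states consistent with `ψ` that share the history `h = h_i(π,x)` are exactly those consistent
with `ψ ∪ h`, and on them the policy plays the same action `π h`. So the step contributes
`P[ψ ∪ h] · Δ(π h | ψ ∪ h) ≤ ζ · P[ψ ∪ h] · Δ(π h | ψ)`, or `0` when `π h` was already played.
Summing over the steps, each state collects `ζ · ∑ Δ(v|ψ)` over the at most `k` distinct new
actions `v` it sees, which is at most `ζ` times the maximum.
-/

section Histories

variable {X V Y : Type*} (μ : V → X → Y) (π : List (V × Y) → V)

lemma hist_succ (x : X) (t : ℕ) :
    hist μ π x (t + 1) = hist μ π x t ++ [(π (hist μ π x t), μ (π (hist μ π x t)) x)] :=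
  rfl

lemma consistent_union {x : X} {ψ ψ' : Finset (V × Y)} :
    Consistent μ x (ψ ∪ ψ') ↔ Consistent μ x ψ ∧ Consistent μ x ψ' := by
  simp [Consistent, or_imp, forall_and]

lemma consistent_hist_self (x : X) (t : ℕ) : Consistent μ x (hist μ π x t).toFinset := by
  induction t with
  | zero => simp [Consistent, hist]
  | succ t ih =>
    rw [hist_succ, List.toFinset_append, consistent_union]
    exact ⟨ih, by simp [Consistent]⟩

lemma hist_eq_of_consistent {x x' : X} {t : ℕ}
    (h : Consistent μ x' (hist μ π x t).toFinset) : hist μ π x' t = hist μ π x t := by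
  induction t with
  | zero => rfl
  | succ t ih =>
    rw [hist_succ, List.toFinset_append, consistent_union] at h
    have hlast : μ (π (hist μ π x t)) x' = μ (π (hist μ π x t)) x :=
      h.2 _ (List.mem_toFinset.mpr (List.mem_singleton_self _))
    rw [hist_succ, hist_succ, ih h.1, hlast]

lemma consistent_hist_iff {x x' : X} {t : ℕ} :
    Consistent μ x' (hist μ π x t).toFinset ↔ hist μ π x' t = hist μ π x t :=
  ⟨hist_eq_of_consistent μ π, fun h => h ▸ consistent_hist_self μ π x' t⟩

lemma acts_union (ψ ψ' : Finset (V × Y)) : acts (ψ ∪ ψ') = acts ψ ∪ acts ψ' :=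
  Finset.image_union _ _

lemma acts_toFinset (l : List (V × Y)) : acts l.toFinset = actsOf l := by
  ext v
  simp [acts, actsOf]

lemma actsOf_hist_zero (x : X) : actsOf (hist μ π x 0) = ∅ := rfl

lemma actsOf_hist_succ (x : X) (t : ℕ) :
    actsOf (hist μ π x (t + 1)) = insert (π (hist μ π x t)) (actsOf (hist μ π x t)) := by
  simp [hist_succ, actsOf]

lemma card_actsOf_hist_le (x : X) (t : ℕ) : (actsOf (hist μ π x t)).card ≤ t := by
  induction t with
  | zero => simp [actsOf_hist_zero]
  | succ t ih =>
    rw [actsOf_hist_succ]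
    exact (Finset.card_insert_le _ _).trans (by omega)

lemma filter_hist_eq_eq_filter_consistent [Fintype X] (ψ : Finset (V × Y)) (x₀ : X) (i : ℕ) :
    (Finset.univ.filter (fun x => Consistent μ x ψ)).filter
        (fun x => hist μ π x i = hist μ π x₀ i) =
      Finset.univ.filter (fun x => Consistent μ x (ψ ∪ (hist μ π x₀ i).toFinset)) := by
  ext x
  simp [consistent_union, consistent_hist_iff]

end Histories

lemma Finset.sum_insert_sdiff {α β : Type*} [DecidableEq α] [AddCommMonoid β] (g : α → β)
    (a : α) (S T : Finset α) :
    ∑ v ∈ insert a T \ S, g v = (if a ∈ S ∪ T then 0 else g a) + ∑ v ∈ T \ S, g v := by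
  split_ifs with ha
  · rcases Finset.mem_union.mp ha with haS | haT
    · rw [Finset.insert_sdiff_of_mem _ haS, zero_add]
    · rw [Finset.insert_eq_of_mem haT, zero_add]
  · rw [Finset.mem_union, not_or] at ha
    rw [Finset.insert_sdiff_of_notMem _ ha.1, Finset.sum_insert]
    exact fun h => ha.2 (Finset.mem_sdiff.mp h).1

section Benefit

variable {X V Y : Type*} [Fintype X] {p : X → ℝ} {μ : V → X → Y} {f : Finset V → X → ℝ}

def freshBen (p : X → ℝ) (μ : V → X → Y) (f : Finset V → X → ℝ) (ψ : Finset (V × Y))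
    (S : Finset V) (v : V) : ℝ :=
  if v ∈ S then 0 else margBen p μ f v ψ

lemma probP_nonneg (hp : ∀ x, 0 ≤ p x) (ψ : Finset (V × Y)) : 0 ≤ probP p μ ψ :=
  Finset.sum_nonneg fun x _ => hp x

lemma probP_mul_margBen (hp : ∀ x, 0 ≤ p x) (v : V) (ψ : Finset (V × Y)) :
    probP p μ ψ * margBen p μ f v ψ =
      ∑ x ∈ Finset.univ.filter (fun x => Consistent μ x ψ),
        p x * (f (insert v (acts ψ)) x - f (acts ψ) x) := by
  rcases eq_or_ne (probP p μ ψ) 0 with h0 | h0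
  · have hz := (Finset.sum_eq_zero_iff_of_nonneg fun x _ => hp x).mp h0
    rw [h0, zero_mul]
    exact (Finset.sum_eq_zero fun x hx => by rw [hz x hx, zero_mul]).symm
  · rw [margBen, mul_inv_cancel_left₀ h0]

lemma sum_marginal_le_mul_freshBen {ζ : ℝ} (hp : ∀ x, 0 ≤ p x)
    (hsub : WeakAdaptiveSubmodular p μ f ζ) {ψ ψ' : Finset (V × Y)} (hψ : ψ ⊆ ψ') (v : V) :
    ∑ x ∈ Finset.univ.filter (fun x => Consistent μ x ψ'),
        p x * (f (insert v (acts ψ')) x - f (acts ψ') x) ≤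
      ζ * (probP p μ ψ' * freshBen p μ f ψ (acts ψ') v) := by
  unfold freshBen
  split_ifs with hv
  · simp [Finset.insert_eq_of_mem hv]
  · rw [← probP_mul_margBen hp]
    rcases (probP_nonneg hp ψ').eq_or_lt with h0 | hpos
    · rw [← h0]
      simp
    · calc probP p μ ψ' * margBen p μ f v ψ'
          ≤ probP p μ ψ' * (ζ * margBen p μ f v ψ) :=
            mul_le_mul_of_nonneg_left (hsub ψ ψ' hψ hpos v hv) hpos.le
        _ = ζ * (probP p μ ψ' * margBen p μ f v ψ) := mul_left_comm _ _ _

lemma sum_step_le_mul_sum_freshBen {ζ : ℝ} (hp : ∀ x, 0 ≤ p x)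
    (hsub : WeakAdaptiveSubmodular p μ f ζ) (ψ : Finset (V × Y)) (π : List (V × Y) → V)
    (i : ℕ) :
    ∑ x ∈ Finset.univ.filter (fun x => Consistent μ x ψ),
        p x * (f (acts ψ ∪ actsOf (hist μ π x (i + 1))) x
          - f (acts ψ ∪ actsOf (hist μ π x i)) x) ≤
      ζ * ∑ x ∈ Finset.univ.filter (fun x => Consistent μ x ψ),
        p x * freshBen p μ f ψ (acts ψ ∪ actsOf (hist μ π x i)) (π (hist μ π x i)) := by
  set s := Finset.univ.filter (fun x => Consistent μ x ψ)
  have hmaps : ∀ x ∈ s, hist μ π x i ∈ s.image (hist μ π · i) :=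
    fun x hx => Finset.mem_image_of_mem _ hx
  rw [← Finset.sum_fiberwise_of_maps_to hmaps, ← Finset.sum_fiberwise_of_maps_to hmaps,
    Finset.mul_sum]
  refine Finset.sum_le_sum fun h hh => ?_
  obtain ⟨x₀, -, rfl⟩ := Finset.mem_image.mp hh
  set ψ' := ψ ∪ (hist μ π x₀ i).toFinset
  have hacts : ∀ x ∈ Finset.univ.filter (fun x => Consistent μ x ψ'),
      hist μ π x i = hist μ π x₀ i ∧ acts ψ ∪ actsOf (hist μ π x i) = acts ψ' := by
    intro x hx
    have hhist : hist μ π x i = hist μ π x₀ i :=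
      (consistent_hist_iff μ π).mp ((consistent_union μ).mp (Finset.mem_filter.mp hx).2).2
    exact ⟨hhist, by rw [hhist, acts_union, acts_toFinset]⟩
  rw [filter_hist_eq_eq_filter_consistent]
  calc ∑ x ∈ Finset.univ.filter (fun x => Consistent μ x ψ'),
        p x * (f (acts ψ ∪ actsOf (hist μ π x (i + 1))) x
          - f (acts ψ ∪ actsOf (hist μ π x i)) x)
      = ∑ x ∈ Finset.univ.filter (fun x => Consistent μ x ψ'),
          p x * (f (insert (π (hist μ π x₀ i)) (acts ψ')) x - f (acts ψ') x) := by
        refine Finset.sum_congr rfl fun x hx => ?_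
        obtain ⟨hhist, hunion⟩ := hacts x hx
        rw [actsOf_hist_succ, Finset.union_insert, hunion, hhist]
    _ ≤ ζ * (probP p μ ψ' * freshBen p μ f ψ (acts ψ') (π (hist μ π x₀ i))) :=
        sum_marginal_le_mul_freshBen hp hsub Finset.subset_union_left _
    _ = ζ * ∑ x ∈ Finset.univ.filter (fun x => Consistent μ x ψ'),
          p x * freshBen p μ f ψ (acts ψ ∪ actsOf (hist μ π x i)) (π (hist μ π x i)) := by
        rw [probP, Finset.sum_mul]
        refine congrArg (ζ * ·) (Finset.sum_congr rfl fun x hx => ?_)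
        obtain ⟨hhist, hunion⟩ := hacts x hx
        rw [hunion, hhist]

lemma sum_range_freshBen_hist (ψ : Finset (V × Y)) (π : List (V × Y) → V) (x : X) (k : ℕ) :
    ∑ i ∈ Finset.range k,
        freshBen p μ f ψ (acts ψ ∪ actsOf (hist μ π x i)) (π (hist μ π x i)) =
      ∑ v ∈ actsOf (hist μ π x k) \ acts ψ, margBen p μ f v ψ := by
  induction k with
  | zero => rw [actsOf_hist_zero, Finset.empty_sdiff, Finset.sum_range_zero, Finset.sum_empty]
  | succ k ih =>
    rw [Finset.sum_range_succ, ih, actsOf_hist_succ, Finset.sum_insert_sdiff, add_comm]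
    rfl

lemma sum_policy_benefit_le {ζ : ℝ} (hp : ∀ x, 0 ≤ p x)
    (hsub : WeakAdaptiveSubmodular p μ f ζ)
    (ψ : Finset (V × Y)) (π : List (V × Y) → V) (k : ℕ) :
    ∑ x ∈ Finset.univ.filter (fun x => Consistent μ x ψ),
        p x * (f (acts ψ ∪ actsOf (hist μ π x k)) x - f (acts ψ) x) ≤
      ζ * ∑ x ∈ Finset.univ.filter (fun x => Consistent μ x ψ),
        p x * ∑ v ∈ actsOf (hist μ π x k) \ acts ψ, margBen p μ f v ψ := by
  have htelescope : ∀ x, f (acts ψ ∪ actsOf (hist μ π x k)) x - f (acts ψ) x =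
      ∑ i ∈ Finset.range k,
        (f (acts ψ ∪ actsOf (hist μ π x (i + 1))) x
          - f (acts ψ ∪ actsOf (hist μ π x i)) x) := by
    intro x
    rw [Finset.sum_range_sub (fun i => f (acts ψ ∪ actsOf (hist μ π x i)) x),
      actsOf_hist_zero, Finset.union_empty]
  calc ∑ x ∈ Finset.univ.filter (fun x => Consistent μ x ψ),
        p x * (f (acts ψ ∪ actsOf (hist μ π x k)) x - f (acts ψ) x)
      = ∑ i ∈ Finset.range k, ∑ x ∈ Finset.univ.filter (fun x => Consistent μ x ψ),
          p x * (f (acts ψ ∪ actsOf (hist μ π x (i + 1))) x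
            - f (acts ψ ∪ actsOf (hist μ π x i)) x) := by
        simp_rw [htelescope, Finset.mul_sum]
        exact Finset.sum_comm
    _ ≤ ∑ i ∈ Finset.range k, ζ * ∑ x ∈ Finset.univ.filter (fun x => Consistent μ x ψ),
          p x * freshBen p μ f ψ (acts ψ ∪ actsOf (hist μ π x i)) (π (hist μ π x i)) :=
        Finset.sum_le_sum fun i _ => sum_step_le_mul_sum_freshBen hp hsub ψ π i
    _ = _ := by
        rw [← Finset.mul_sum, Finset.sum_comm]
        simp_rw [← Finset.mul_sum, sum_range_freshBen_hist]

end Benefit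

/-- the conditional expected marginal benefit of any policy run
for `k` steps is at most `ζ` times the best sum of `k` single-action
conditional expected marginal benefits. -/
theorem policy_benefit_le_zeta_mul_max {X V Y : Type*}
    [Fintype X] [Fintype V]
    (p : X → ℝ) (hp : ∀ x, 0 ≤ p x)
    (μ : V → X → Y) (f : Finset V → X → ℝ)
    (ζ : ℝ) (hζ : 1 ≤ ζ)
    (hsub : WeakAdaptiveSubmodular p μ f ζ)
    (ψ : Finset (V × Y)) (hψ : 0 < probP p μ ψ)
    (π : List (V × Y) → V) (k : ℕ) :
    (probP p μ ψ)⁻¹ *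
        ∑ x ∈ Finset.univ.filter (fun x => Consistent μ x ψ),
          p x * (f (acts ψ ∪ actsOf (hist μ π x k)) x - f (acts ψ) x) ≤
      ζ * (Finset.univ.filter (fun A : Finset V => A.card ≤ k)).sup'
          ⟨∅, by simp⟩ (fun A => ∑ v ∈ A, margBen p μ f v ψ) := by
  set M := (Finset.univ.filter (fun A : Finset V => A.card ≤ k)).sup'
    ⟨∅, by simp⟩ (fun A => ∑ v ∈ A, margBen p μ f v ψ)
  have hM : ∀ x, ∑ v ∈ actsOf (hist μ π x k) \ acts ψ, margBen p μ f v ψ ≤ M := fun x =>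
    Finset.le_sup' (fun A => ∑ v ∈ A, margBen p μ f v ψ) <| Finset.mem_filter.mpr
      ⟨Finset.mem_univ _,
        (Finset.card_le_card Finset.sdiff_subset).trans (card_actsOf_hist_le μ π x k)⟩
  calc (probP p μ ψ)⁻¹ * ∑ x ∈ Finset.univ.filter (fun x => Consistent μ x ψ),
        p x * (f (acts ψ ∪ actsOf (hist μ π x k)) x - f (acts ψ) x)
      ≤ (probP p μ ψ)⁻¹ * (ζ * ∑ x ∈ Finset.univ.filter (fun x => Consistent μ x ψ),
          p x * ∑ v ∈ actsOf (hist μ π x k) \ acts ψ, margBen p μ f v ψ) := by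
        gcongr
        exact sum_policy_benefit_le hp hsub ψ π k
    _ ≤ (probP p μ ψ)⁻¹ * (ζ * (probP p μ ψ * M)) := by
        rw [probP, Finset.sum_mul]
        gcongr with x
        · exact hp x
        · exact hM x
    _ = ζ * M := by field_simp
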